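/- arXiv:2508.08119 — 2 statements merged into one kernel-verified Lean document; each statement's English description precedes it below -/
import Mathlib

section
/- Let t ≥ 1 be an integer and let G be a finite simple graph that admits an immersion of K_{70t + 71}. Then G admits a totally even immersion of K_t. -/
/-!
Colour each edge `ab` of `K_N` by the parity `c a b` of the length of its branch trail. Lifting
a walk of `K_N` to the concatenation of the branch trails of its edges turns an immersion `J` of
`K_t` in `K_N` into an immersion of `K_t` in `G`, whose branch trails have the parities of the
colour sums along the trails of `J`. So it suffices to find `J` whose trails all have even
colour sum.

`J` is built greedily: the pairs of branch vertices are joined one after another by paths of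
length at most 3 through non-branch vertices, avoiding the edges used so far. If some vertex `j`
has `t` near-clones (or `t` near-anticlones), that is, vertices whose colours to almost all other
vertices agree with (resp. differ from) those of `j`, these serve as branch vertices: two of
them, `a` and `b`, agree on many vertices `w`, and `a w b` is even. Otherwise any `t` vertices
will do: for a pair `a b` pick a little-used `u` that is neither a near-clone nor a
near-anticlone of `b`; then many `v` have `c u v + c b v = c a u`, which makes `a u v b` even.
-/

open SimpleGraph

/-- An immersion of `H` in `G`: an injection `φ` of the vertices of `H` into `G`
(the branch vertices), together with, for each edge `uv` of `H`, a trail in `G`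
from `φ u` to `φ v` (the branch trails), such that the branch trails are
pairwise edge-disjoint.  The trail assigned to the reversed adjacency is the
reversed trail, so there is one branch trail per edge of `H`. -/
structure Immersion {V : Type*} {W : Type*} (G : SimpleGraph V) (H : SimpleGraph W) where
  φ : W ↪ V
  trail : ∀ ⦃u v : W⦄, H.Adj u v → G.Walk (φ u) (φ v)
  isTrail : ∀ ⦃u v : W⦄ (h : H.Adj u v), (trail h).IsTrail
  symm : ∀ ⦃u v : W⦄ (h : H.Adj u v), trail h.symm = (trail h).reverse
  disjoint : ∀ ⦃u v a b : W⦄ (h₁ : H.Adj u v) (h₂ : H.Adj a b),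
      s(u, v) ≠ s(a, b) → List.Disjoint (trail h₁).edges (trail h₂).edges

/-- `G` admits an immersion of `H`. -/
def HasImmersion {V W : Type*} (G : SimpleGraph V) (H : SimpleGraph W) : Prop :=
  Nonempty (Immersion G H)

/-- `G` admits a totally odd immersion of `H`: every branch trail has odd length. -/
def HasTotallyOddImmersion {V W : Type*} (G : SimpleGraph V) (H : SimpleGraph W) : Prop :=
  ∃ I : Immersion G H, ∀ ⦃u v : W⦄ (h : H.Adj u v), Odd (I.trail h).length

/-- `G` admits a totally even immersion of `H`: every branch trail has even length. -/
def HasTotallyEvenImmersion {V W : Type*} (G : SimpleGraph V) (H : SimpleGraph W) : Prop :=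
  ∃ I : Immersion G H, ∀ ⦃u v : W⦄ (h : H.Adj u v), Even (I.trail h).length

open Finset

local notation "𝒢" U:max => fromEdgeSet ((U : Finset (Sym2 _)) : Set (Sym2 _))

namespace SimpleGraph.Walk

variable {V M : Type*} [AddCommMonoid M] {G : SimpleGraph V} (c : V → V → M)

def weight {u v : V} (p : G.Walk u v) : M :=
  (p.darts.map fun d => c d.fst d.snd).sum

@[simp]
lemma weight_nil {u : V} : (nil : G.Walk u u).weight c = 0 := rfl

@[simp]
lemma weight_cons {u v w : V} (h : G.Adj u v) (p : G.Walk v w) :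
    (cons h p).weight c = c u v + p.weight c := by
  simp [weight]

variable {c} in
lemma weight_reverse (hc : ∀ a b, c a b = c b a) {u v : V} (p : G.Walk u v) :
    p.reverse.weight c = p.weight c := by
  simp [weight, darts_reverse, List.sum_reverse, Function.comp_def, hc]

end SimpleGraph.Walk

namespace Immersion

variable {V W X : Type*} {G : SimpleGraph V} {H : SimpleGraph W} {K : SimpleGraph X}
  (I : Immersion G H)

def mapWalk : ∀ {u v : W}, H.Walk u v → G.Walk (I.φ u) (I.φ v)
  | _, _, .nil => .nil
  | _, _, .cons h p => (I.trail h).append (mapWalk p)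

@[simp]
lemma mapWalk_nil {u : W} : I.mapWalk (.nil : H.Walk u u) = .nil := rfl

@[simp]
lemma mapWalk_cons {u v w : W} (h : H.Adj u v) (p : H.Walk v w) :
    I.mapWalk (.cons h p) = (I.trail h).append (I.mapWalk p) := rfl

lemma mapWalk_append {u v w : W} (p : H.Walk u v) (q : H.Walk v w) :
    I.mapWalk (p.append q) = (I.mapWalk p).append (I.mapWalk q) := by
  induction p with
  | nil => rfl
  | cons h p ih => simp [ih, Walk.append_assoc]

lemma mapWalk_reverse {u v : W} (p : H.Walk u v) :
    I.mapWalk p.reverse = (I.mapWalk p).reverse := by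
  induction p with
  | nil => rfl
  | cons h p ih =>
    simp [Walk.reverse_cons, mapWalk_append, ih, I.symm h, Walk.reverse_append]

lemma exists_dart_of_mem_edges_mapWalk {u v : W} {p : H.Walk u v} {e : Sym2 V}
    (he : e ∈ (I.mapWalk p).edges) : ∃ d ∈ p.darts, e ∈ (I.trail d.adj).edges := by
  induction p with
  | nil => simp at he
  | cons h p ih =>
    rw [mapWalk_cons, Walk.edges_append, List.mem_append] at he
    rcases he with he | he
    · exact ⟨_, List.mem_cons_self, he⟩
    · obtain ⟨d, hd, he⟩ := ih he
      exact ⟨d, List.mem_cons_of_mem _ hd, he⟩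

lemma disjoint_edges_mapWalk {u v a b : W} {p : H.Walk u v} {q : H.Walk a b}
    (hpq : p.edges.Disjoint q.edges) : (I.mapWalk p).edges.Disjoint (I.mapWalk q).edges := by
  intro e hep heq
  obtain ⟨d, hd, hep⟩ := I.exists_dart_of_mem_edges_mapWalk hep
  obtain ⟨d', hd', heq⟩ := I.exists_dart_of_mem_edges_mapWalk heq
  have hne : d.edge ≠ d'.edge := fun h =>
    hpq (List.mem_map_of_mem hd) (h ▸ List.mem_map_of_mem hd')
  exact I.disjoint d.adj d'.adj hne hep heq

lemma isTrail_mapWalk {u v : W} {p : H.Walk u v} (hp : p.IsTrail) : (I.mapWalk p).IsTrail := by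
  induction p with
  | nil => simp
  | cons h p ih =>
    rw [Walk.isTrail_cons] at hp
    have hdisj : (Walk.cons h .nil).edges.Disjoint p.edges := by simpa using hp.2
    simpa [Walk.isTrail_append, I.isTrail h, ih hp.1] using I.disjoint_edges_mapWalk hdisj

open Classical in
noncomputable def lengthParity (a b : W) : ZMod 2 :=
  if h : H.Adj a b then ((I.trail h).length : ZMod 2) else 0

lemma lengthParity_comm (a b : W) : I.lengthParity a b = I.lengthParity b a := by
  by_cases h : H.Adj a b
  · simp [lengthParity, h, h.symm, I.symm h]
  · rw [lengthParity, lengthParity, dif_neg h, dif_neg (mt H.adj_symm h)]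

lemma natCast_length_mapWalk {u v : W} (p : H.Walk u v) :
    ((I.mapWalk p).length : ZMod 2) = p.weight I.lengthParity := by
  induction p with
  | nil => simp
  | cons h p ih => simp [ih, lengthParity, h]

def comp (J : Immersion H K) : Immersion G K where
  φ := J.φ.trans I.φ
  trail _ _ h := I.mapWalk (J.trail h)
  isTrail _ _ h := I.isTrail_mapWalk (J.isTrail h)
  symm _ _ h := (congrArg I.mapWalk (J.symm h)).trans (I.mapWalk_reverse _)
  disjoint _ _ _ _ h₁ h₂ hne := I.disjoint_edges_mapWalk (J.disjoint h₁ h₂ hne)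

section OfLT

variable [LinearOrder W] {φ : W ↪ V}

def orient (tr : ∀ u v : W, G.Walk (φ u) (φ v)) (u v : W) : G.Walk (φ u) (φ v) :=
  if u < v then tr u v else (tr v u).reverse

lemma exists_lt_of_mem_edges_orient {tr : ∀ u v : W, G.Walk (φ u) (φ v)} {u v : W} {e : Sym2 V}
    (huv : u ≠ v) (he : e ∈ (orient tr u v).edges) :
    ∃ x y, x < y ∧ s(x, y) = s(u, v) ∧ e ∈ (tr x y).edges := by
  unfold orient at he
  split_ifs at he with h
  · exact ⟨u, v, h, rfl, he⟩
  · rw [Walk.edges_reverse, List.mem_reverse] at he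
    exact ⟨v, u, lt_of_le_of_ne (not_lt.1 h) huv.symm, Sym2.eq_swap, he⟩

variable (φ) in
def ofLT (tr : ∀ u v : W, G.Walk (φ u) (φ v))
    (htr : ∀ ⦃u v⦄, u < v → H.Adj u v → (tr u v).IsTrail)
    (hdisj : ∀ ⦃u v a b⦄, u < v → a < b → H.Adj u v → H.Adj a b → (u, v) ≠ (a, b) →
      (tr u v).edges.Disjoint (tr a b).edges) : Immersion G H where
  φ := φ
  trail u v _ := orient tr u v
  isTrail u v h := by
    unfold orient
    split_ifs with huv
    · exact htr huv h
    · exact (htr (lt_of_le_of_ne (not_lt.1 huv) h.ne.symm) h.symm).reverse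
  symm u v h := by
    rcases lt_or_gt_of_ne h.ne with huv | hvu
    · simp [orient, huv, huv.not_gt]
    · simp [orient, hvu, hvu.not_gt]
  disjoint u v a b h₁ h₂ hne e he₁ he₂ := by
    obtain ⟨x, y, hxy, hs, he₁⟩ := exists_lt_of_mem_edges_orient h₁.ne he₁
    obtain ⟨x', y', hxy', hs', he₂⟩ := exists_lt_of_mem_edges_orient h₂.ne he₂
    have hadj : H.Adj x y := H.mem_edgeSet.1 (hs ▸ H.mem_edgeSet.2 h₁)
    have hadj' : H.Adj x' y' := H.mem_edgeSet.1 (hs' ▸ H.mem_edgeSet.2 h₂)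
    refine hdisj hxy hxy' hadj hadj' ?_ he₁ he₂
    rintro ⟨⟩
    exact hne (hs.symm.trans hs')

lemma ofLT_trail {tr : ∀ u v : W, G.Walk (φ u) (φ v)} {htr hdisj} {u v : W} (h : H.Adj u v) :
    (ofLT (H := H) φ tr htr hdisj).trail h = orient tr u v := rfl

end OfLT

end Immersion

lemma SimpleGraph.card_filter_lt_degree_fromEdgeSet_mul_le {V : Type*} [Fintype V]
    [DecidableEq V] (U : Finset (Sym2 V)) (m : ℕ) :
    #{x | m < (fromEdgeSet (U : Set (Sym2 V))).degree x} * (m + 1) ≤ 2 * #U := by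
  set G := fromEdgeSet (U : Set (Sym2 V))
  rw [← smul_eq_mul]
  calc #{x | m < G.degree x} • (m + 1) ≤ ∑ x ∈ {x | m < G.degree x}, G.degree x :=
        card_nsmul_le_sum _ _ _ fun x hx => (mem_filter.1 hx).2
    _ ≤ ∑ x, G.degree x := sum_le_sum_of_subset (subset_univ _)
    _ ≤ 2 * #U := by
      rw [sum_degrees_eq_twice_card_edges]
      gcongr
      intro e he
      simp only [G, mem_edgeFinset, edgeSet_fromEdgeSet] at he
      exact he.1

section ParityFibers

variable {α : Type*} [Fintype α] [DecidableEq α] (c : α → α → ZMod 2)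

def parityFiber (x y : α) (b : ZMod 2) : Finset α :=
  ((univ.erase x).erase y).filter fun w => c x w + c y w = b

variable {c} in
lemma mem_parityFiber {x y w : α} {b : ZMod 2} :
    w ∈ parityFiber c x y b ↔ w ≠ x ∧ w ≠ y ∧ c x w + c y w = b := by
  simp only [parityFiber, mem_filter, mem_erase, mem_univ]
  tauto

lemma card_parityFiber_zero_add_one {x y : α} (hxy : x ≠ y) :
    #(parityFiber c x y 0) + #(parityFiber c x y 1) = Fintype.card α - 2 := by
  have hone : parityFiber c x y 1 = ((univ.erase x).erase y).filter
      fun w => ¬ c x w + c y w = 0 :=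
    filter_congr fun w _ => by generalize c x w + c y w = a; revert a; decide
  rw [parityFiber, hone, card_filter_add_card_filter_not,
    card_erase_of_mem (mem_erase.2 ⟨hxy.symm, mem_univ y⟩), card_erase_of_mem (mem_univ x),
    card_univ, Nat.sub_sub]

lemma parityFiber_one_subset (x y j : α) (b : ZMod 2) :
    parityFiber c x y 1 ⊆ parityFiber c x j b ∪ parityFiber c y j b ∪ {j} := by
  intro w hw
  obtain ⟨hwx, hwy, hxy⟩ := mem_parityFiber.1 hw
  by_cases hwj : w = j
  · simp [hwj]
  -- `c x w + c j w` and `c y w + c j w` add up to `c x w + c y w = 1`, so one of them is `b`.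
  have key : ∀ p q r b : ZMod 2, p + q = 1 → p + r = b ∨ q + r = b := by decide
  rcases key _ _ (c j w) b hxy with h | h
  · simp [mem_parityFiber, hwx, hwj, h]
  · simp [mem_parityFiber, hwy, hwj, h]

/-- Vertices `u` for which `c u w + c j w = b` holds for at most `m` vertices `w`: for `b = 1`
they are near-clones of `j`, for `b = 0` near-anticlones. -/
def nearClones (m : ℕ) (j : α) (b : ZMod 2) : Finset α :=
  univ.filter fun u => #(parityFiber c u j b) ≤ m

lemma card_le_card_parityFiber_zero {m : ℕ} {j x y : α} {b : ZMod 2}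
    (hx : x ∈ nearClones c m j b) (hy : y ∈ nearClones c m j b) (hxy : x ≠ y) :
    Fintype.card α ≤ #(parityFiber c x y 0) + 2 * m + 3 := by
  have h₁ := card_le_card (parityFiber_one_subset c x y j b)
  have h₂ := card_union_le (parityFiber c x j b ∪ parityFiber c y j b) {j}
  have h₃ := card_union_le (parityFiber c x j b) (parityFiber c y j b)
  have h₄ := card_parityFiber_zero_add_one c hxy
  simp only [nearClones, mem_filter, mem_univ, true_and] at hx hy
  rw [card_singleton] at h₂
  omega

end ParityFibers

section Routes

variable {α : Type*} [Fintype α] [DecidableEq α] (c : α → α → ZMod 2) {t : ℕ} (ψ : Fin t ↪ α)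

structure IsRoute {a b : α} (p : (⊤ : SimpleGraph α).Walk a b) : Prop where
  isPath : p.IsPath
  length_le : p.length ≤ 3
  weight_eq_zero : p.weight c = 0
  eq_or_eq_of_mem_support : ∀ k, ψ k ∈ p.support → ψ k = a ∨ ψ k = b

/-- The bounds `8 * t` and `3 * t * t` are what the routes between the other pairs of branch
vertices can use up. -/
def CanRoute : Prop :=
  ∀ (i j : Fin t) (U : Finset (Sym2 α)), i ≠ j → (𝒢 U).degree (ψ i) ≤ 8 * t →
    (𝒢 U).degree (ψ j) ≤ 8 * t → #U ≤ 3 * t * t →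
    ∃ p : (⊤ : SimpleGraph α).Walk (ψ i) (ψ j), IsRoute c ψ p ∧ ∀ e ∈ p.edges, e ∉ U

variable {ψ} in
lemma exists_mem_avoiding_of_card_lt {U : Finset (Sym2 α)} {x y : α} (S : Finset α)
    (hS : t + (𝒢 U).degree x + (𝒢 U).degree y < #S) :
    ∃ w ∈ S, (∀ k, ψ k ≠ w) ∧ (x ≠ w → s(x, w) ∉ U) ∧ (y ≠ w → s(w, y) ∉ U) := by
  have hB : #(univ.map ψ ∪ (𝒢 U).neighborFinset x ∪ (𝒢 U).neighborFinset y) < #S := by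
    grw [card_union_le, card_union_le]
    simpa using hS
  obtain ⟨w, hw, hwB⟩ := exists_mem_notMem_of_card_lt_card hB
  simp only [mem_union, mem_map, mem_univ, true_and, mem_neighborFinset, fromEdgeSet_adj,
    not_or, not_exists, not_and, mem_coe] at hwB
  obtain ⟨⟨hwψ, hxw⟩, hyw⟩ := hwB
  exact ⟨w, hw, hwψ, fun h h' => hxw h' h, fun h h' => hyw (Sym2.eq_swap ▸ h') h⟩

lemma canRoute_of_lt_card_parityFiber (hc : ∀ a b, c a b = c b a)
    (hψ : ∀ i j, i ≠ j → 17 * t < #(parityFiber c (ψ i) (ψ j) 0)) : CanRoute c ψ := by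
  intro i j U hij hi hj _
  obtain ⟨w, hw, hwψ, hiw, hwj⟩ :=
    exists_mem_avoiding_of_card_lt (ψ := ψ) (U := U) (x := ψ i) (y := ψ j)
      (parityFiber c (ψ i) (ψ j) 0) (by have := hψ i j hij; omega)
  obtain ⟨hwi, hwj', hwc⟩ := mem_parityFiber.1 hw
  refine ⟨.cons ((top_adj _ _).2 hwi.symm) (.cons ((top_adj _ _).2 hwj') .nil),
    ⟨?_, by simp, by simpa [hc w (ψ j)] using hwc, ?_⟩, ?_⟩
  · simp [hwi.symm, hwj', ψ.injective.ne hij]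
  · simp only [Walk.support_cons, Walk.support_nil, List.mem_cons, List.not_mem_nil, or_false]
    rintro k (h | h | h)
    exacts [Or.inl h, (hwψ k h).elim, Or.inr h]
  · simp only [Walk.edges_cons, Walk.edges_nil, List.mem_cons, List.not_mem_nil, or_false]
    rintro e (rfl | rfl)
    exacts [hiw hwi.symm, hwj hwj'.symm]

variable {ψ} in
lemma exists_light_vertex_not_mem_nearClones (hα : 13 * t < Fintype.card α)
    (hcl : ∀ j b, #(nearClones c (12 * t) j b) < t) {U : Finset (Sym2 α)} (hU : #U ≤ 3 * t * t)
    {x : α} (hx : (𝒢 U).degree x ≤ 8 * t) (y : α) :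
    ∃ u, (∀ k, ψ k ≠ u) ∧ (x ≠ u → s(x, u) ∉ U) ∧ (𝒢 U).degree u ≤ 3 * t ∧
      ∀ b, 12 * t < #(parityFiber c u y b) := by
  have hheavy : #({u | 3 * t < (𝒢 U).degree u} : Finset α) ≤ 2 * t := by
    have := card_filter_lt_degree_fromEdgeSet_mul_le U (3 * t)
    by_contra! hlt
    have := Nat.mul_le_mul_right (3 * t + 1) (Nat.succ_le_of_lt hlt)
    rw [Nat.succ_eq_add_one] at this
    nlinarith
  have hB : #(nearClones c (12 * t) y 0 ∪ nearClones c (12 * t) y 1 ∪ univ.map ψ ∪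
      (𝒢 U).neighborFinset x ∪ ({u | 3 * t < (𝒢 U).degree u} : Finset α)) <
      #(univ : Finset α) := by
    grw [card_union_le, card_union_le, card_union_le, card_union_le]
    simp only [card_map, card_univ, Fintype.card_fin, card_neighborFinset_eq_degree]
    have := hcl y 0
    have := hcl y 1
    omega
  obtain ⟨u, -, huB⟩ := exists_mem_notMem_of_card_lt_card hB
  simp only [nearClones, mem_union, mem_filter, mem_map, mem_univ, true_and,
    mem_neighborFinset, fromEdgeSet_adj, not_or, not_exists, not_and, not_le, mem_coe] at huB
  obtain ⟨⟨⟨⟨hu₀, hu₁⟩, huψ⟩, hxu⟩, hu⟩ := huB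
  have hb : ∀ b : ZMod 2, b = 0 ∨ b = 1 := by decide
  refine ⟨u, huψ, fun h h' => hxu h' h, not_lt.1 hu, fun b => ?_⟩
  rcases hb b with rfl | rfl <;> assumption

lemma canRoute_of_card_nearClones_lt (hc : ∀ a b, c a b = c b a)
    (hα : 13 * t < Fintype.card α) (hcl : ∀ j b, #(nearClones c (12 * t) j b) < t) :
    CanRoute c ψ := by
  intro i j U hij hi hj hU
  obtain ⟨u, huψ, hiu, hu, hfiber⟩ :=
    exists_light_vertex_not_mem_nearClones c hα hcl (ψ := ψ) hU hi (ψ j)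
  have hui : u ≠ ψ i := fun h => huψ i h.symm
  have huj : u ≠ ψ j := fun h => huψ j h.symm
  -- Choosing `v` with `c u v + c (ψ j) v = c (ψ i) u` makes the weight vanish.
  obtain ⟨v, hv, hvψ, huv, hvj⟩ :=
    exists_mem_avoiding_of_card_lt (ψ := ψ) (U := U) (x := u) (y := ψ j)
      (parityFiber c u (ψ j) (c (ψ i) u)) (by have := hfiber (c (ψ i) u); omega)
  obtain ⟨hvu, hvj', hvc⟩ := mem_parityFiber.1 hv
  have hvi : v ≠ ψ i := fun h => hvψ i h.symm
  refine ⟨.cons ((top_adj _ _).2 hui.symm) (.cons ((top_adj _ _).2 hvu.symm)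
    (.cons ((top_adj _ _).2 hvj') .nil)), ⟨?_, by simp, ?_, ?_⟩, ?_⟩
  · simp [hui.symm, hvi.symm, ψ.injective.ne hij, hvu.symm, huj, hvj']
  · simp only [Walk.weight_cons, Walk.weight_nil, add_zero, hc v (ψ j)]
    rw [hvc, CharTwo.add_self_eq_zero]
  · simp only [Walk.support_cons, Walk.support_nil, List.mem_cons, List.not_mem_nil, or_false]
    rintro k (h | h | h | h)
    exacts [Or.inl h, (huψ k h).elim, (hvψ k h).elim, Or.inr h]
  · simp only [Walk.edges_cons, Walk.edges_nil, List.mem_cons, List.not_mem_nil, or_false]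
    rintro e (rfl | rfl | rfl)
    exacts [hiu hui.symm, huv hvu.symm, hvj hvj'.symm]

end Routes

section Greedy

variable {α : Type*} [DecidableEq α] {c : α → α → ZMod 2} {t : ℕ} {ψ : Fin t ↪ α}
  {T : Finset (Fin t × Fin t)}
  {route : ∀ p : Fin t × Fin t, (⊤ : SimpleGraph α).Walk (ψ p.1) (ψ p.2)}

lemma card_filter_fst_eq_or_snd_eq_le (T : Finset (Fin t × Fin t)) (k : Fin t) :
    #{q ∈ T | q.1 = k ∨ q.2 = k} ≤ 2 * t := by
  have hsub : {q ∈ T | q.1 = k ∨ q.2 = k} ⊆ univ.image (k, ·) ∪ univ.image (·, k) := by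
    intro q hq
    rcases (mem_filter.1 hq).2 with h | h
    · exact mem_union_left _ (mem_image.2 ⟨q.2, mem_univ _, by rw [← h]⟩)
    · exact mem_union_right _ (mem_image.2 ⟨q.1, mem_univ _, by rw [← h]⟩)
  grw [card_le_card hsub, card_union_le, card_image_le, card_image_le]
  simp [two_mul]

lemma degree_biUnion_edges_le [Fintype α] (hT : ∀ q ∈ T, IsRoute c ψ (route q)) (k : Fin t) :
    (𝒢 (T.biUnion fun q => (route q).edges.toFinset)).degree (ψ k) ≤ 8 * t := by
  -- A route through `ψ k` ends there, so only routes of pairs containing `k` contribute.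
  have hsub : (𝒢 (T.biUnion fun q => (route q).edges.toFinset)).neighborFinset (ψ k) ⊆
      {q ∈ T | q.1 = k ∨ q.2 = k}.biUnion fun q => (route q).support.toFinset := by
    intro w hw
    simp only [mem_neighborFinset, fromEdgeSet_adj, coe_biUnion, Set.mem_iUnion, mem_coe,
      List.mem_toFinset, exists_prop] at hw
    obtain ⟨⟨q, hq, he⟩, -⟩ := hw
    have hk := (hT q hq).eq_or_eq_of_mem_support k (Walk.fst_mem_support_of_mem_edges _ he)
    refine mem_biUnion.2 ⟨q, mem_filter.2 ⟨hq, ?_⟩,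
      List.mem_toFinset.2 (Walk.snd_mem_support_of_mem_edges _ he)⟩
    rcases hk with h | h
    · exact Or.inl (ψ.injective h).symm
    · exact Or.inr (ψ.injective h).symm
  have hsupp : ∀ q ∈ T, #(route q).support.toFinset ≤ 4 := fun q hq => by
    grw [List.toFinset_card_le, Walk.length_support, (hT q hq).length_le]
  rw [← card_neighborFinset_eq_degree]
  grw [card_le_card hsub, card_biUnion_le, sum_le_card_nsmul _ _ 4
    fun q hq => hsupp q (mem_filter.1 hq).1, smul_eq_mul, card_filter_fst_eq_or_snd_eq_le]
  omega

lemma card_biUnion_edges_le (hT : ∀ q ∈ T, (route q).length ≤ 3) :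
    #(T.biUnion fun q => (route q).edges.toFinset) ≤ 3 * t * t := by
  grw [card_biUnion_le, sum_le_card_nsmul _ _ 3 fun q hq => ?_, smul_eq_mul, card_le_univ]
  · simp only [Fintype.card_prod, Fintype.card_fin]
    exact le_of_eq (by ring)
  · grw [List.toFinset_card_le, Walk.length_edges, hT q hq]

lemma exists_routes [Fintype α] (hψ : CanRoute c ψ) (T : Finset (Fin t × Fin t))
    (hT : ∀ p ∈ T, p.1 ≠ p.2) :
    ∃ route : ∀ p : Fin t × Fin t, (⊤ : SimpleGraph α).Walk (ψ p.1) (ψ p.2),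
      (∀ p ∈ T, IsRoute c ψ (route p)) ∧
      ∀ p ∈ T, ∀ q ∈ T, p ≠ q → (route p).edges.Disjoint (route q).edges := by
  induction T using Finset.induction_on with
  | empty => exact ⟨fun _ => reachable_top.some, by simp, by simp⟩
  | insert p T hp ih =>
    obtain ⟨route, hroute, hdisj⟩ := ih fun q hq => hT q (mem_insert_of_mem hq)
    obtain ⟨r, hr, hrU⟩ := hψ p.1 p.2 (T.biUnion fun q => (route q).edges.toFinset)
      (hT p (mem_insert_self p T)) (degree_biUnion_edges_le hroute p.1)
      (degree_biUnion_edges_le hroute p.2)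
      (card_biUnion_edges_le fun q hq => (hroute q hq).length_le)
    have hr' : ∀ q ∈ T, r.edges.Disjoint (route q).edges := fun q hq e he he' =>
      hrU e he (mem_biUnion.2 ⟨q, hq, List.mem_toFinset.2 he'⟩)
    have hupdate : ∀ q ∈ T, Function.update route p r q = route q := fun q hq =>
      Function.update_of_ne (ne_of_mem_of_not_mem hq hp) _ _
    refine ⟨Function.update route p r, ?_, ?_⟩
    · intro q hq
      rcases mem_insert.1 hq with rfl | hq
      · rwa [Function.update_self]
      · rw [hupdate q hq]
        exact hroute q hq
    · intro q hq q' hq' hne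
      rw [mem_insert] at hq hq'
      rcases hq with rfl | hq <;> rcases hq' with rfl | hq'
      · exact (hne rfl).elim
      · rw [Function.update_self, hupdate q' hq']
        exact hr' q' hq'
      · rw [Function.update_self, hupdate q hq]
        exact (hr' q hq).symm
      · rw [hupdate q hq, hupdate q' hq']
        exact hdisj q hq q' hq' hne

end Greedy

lemma exists_canRoute {α : Type*} [Fintype α] [DecidableEq α] {c : α → α → ZMod 2} {t : ℕ}
    (hc : ∀ a b, c a b = c b a) (hα : 41 * t + 4 ≤ Fintype.card α) :
    ∃ ψ : Fin t ↪ α, CanRoute c ψ := by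
  by_cases h : ∃ j b, t ≤ #(nearClones c (12 * t) j b)
  · obtain ⟨j, b, hjb⟩ := h
    obtain ⟨ψ⟩ : Nonempty (Fin t ↪ nearClones c (12 * t) j b) :=
      Function.Embedding.nonempty_of_card_le (by simpa using hjb)
    refine ⟨ψ.trans (Function.Embedding.subtype _),
      canRoute_of_lt_card_parityFiber c _ hc fun i i' hii' => ?_⟩
    have := card_le_card_parityFiber_zero c (ψ i).2 (ψ i').2
      (Subtype.val_injective.ne (ψ.injective.ne hii'))
    simp only [Function.Embedding.trans_apply, Function.Embedding.subtype_apply]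
    omega
  · push Not at h
    obtain ⟨ψ⟩ := Function.Embedding.nonempty_of_card_le (α := Fin t) (β := α) (by simp; omega)
    exact ⟨ψ, canRoute_of_card_nearClones_lt c ψ hc (by omega) h⟩

theorem exists_immersion_top_weight_eq_zero {α : Type*} [Fintype α] [DecidableEq α]
    {c : α → α → ZMod 2} {t : ℕ} (hc : ∀ a b, c a b = c b a)
    (hα : 41 * t + 4 ≤ Fintype.card α) :
    ∃ J : Immersion (⊤ : SimpleGraph α) (⊤ : SimpleGraph (Fin t)),
      ∀ ⦃u v⦄ (h : (⊤ : SimpleGraph (Fin t)).Adj u v), (J.trail h).weight c = 0 := by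
  obtain ⟨ψ, hψ⟩ := exists_canRoute hc hα
  obtain ⟨route, hroute, hdisj⟩ := exists_routes hψ {p | p.1 ≠ p.2} (by simp)
  have hmem : ∀ {u v : Fin t}, u < v → (u, v) ∈ ({p | p.1 ≠ p.2} : Finset (Fin t × Fin t)) :=
    fun huv => by simpa using huv.ne
  refine ⟨Immersion.ofLT ψ (fun u v => route (u, v))
    (fun _ _ huv _ => (hroute _ (hmem huv)).isPath.isTrail)
    (fun _ _ _ _ huv hab _ _ hne => hdisj _ (hmem huv) _ (hmem hab) hne), fun u v h => ?_⟩
  rw [Immersion.ofLT_trail, Immersion.orient]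
  split_ifs with huv
  · exact (hroute _ (hmem huv)).weight_eq_zero
  · refine (Walk.weight_reverse hc _).trans ?_
    exact (hroute _ (hmem (lt_of_le_of_ne (not_lt.1 huv) h.ne.symm))).weight_eq_zero

theorem totally_even_from_immersion_general {V : Type*} (t : ℕ)
    (G : SimpleGraph V) (h : HasImmersion G (⊤ : SimpleGraph (Fin (70 * t + 71)))) :
    HasTotallyEvenImmersion G (⊤ : SimpleGraph (Fin t)) := by
  obtain ⟨I⟩ := h
  obtain ⟨J, hJ⟩ := exists_immersion_top_weight_eq_zero (t := t) I.lengthParity_comm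
    (by simp only [Fintype.card_fin]; omega)
  exact ⟨I.comp J, fun u v huv =>
    ZMod.natCast_eq_zero_iff_even.1 ((I.natCast_length_mapWalk _).trans (hJ huv))⟩

/-- If G admits an immersion of K_{70t + 71}, then G admits a totally even
immersion of K_t. -/
theorem totally_even_from_immersion {V : Type*} [Fintype V] (t : ℕ) (ht : 1 ≤ t)
    (G : SimpleGraph V) (h : HasImmersion G (⊤ : SimpleGraph (Fin (70 * t + 71)))) :
    HasTotallyEvenImmersion G (⊤ : SimpleGraph (Fin t)) :=
  totally_even_from_immersion_general t G h
end

section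
/- Let G be a finite simple graph, let x be a vertex of G, and let C be an odd cycle in G not containing x. Suppose P₁ and P₂ are two edge-disjoint paths in G, each starting at x, each ending at a vertex of C, and each meeting C only in its final vertex. Then G contains an odd x-circuit, i.e., a closed trail of odd length whose first and last vertex is x and in which x does not occur as an internal vertex. -/
open SimpleGraph

section Aux
variable {V : Type*} {G : SimpleGraph V}

lemma aux_getVert_mem_support {u v : V} (p : G.Walk u v) (i : ℕ) :
    p.getVert i ∈ p.support := by
  by_cases h : i ≤ p.length
  · exact SimpleGraph.Walk.mem_support_iff_exists_getVert.mpr ⟨i, rfl, h⟩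
  · rw [p.getVert_of_length_le (le_of_not_ge h)]
    exact p.end_mem_support

lemma aux_path_getVert_ne_start {u v : V} {p : G.Walk u v} (hp : p.IsPath)
    {i : ℕ} (hi : 0 < i) (hil : i ≤ p.length) : p.getVert i ≠ u := by
  cases p with
  | nil => simp at hil; omega
  | cons h q =>
    obtain ⟨i, rfl⟩ := Nat.exists_eq_add_of_lt hi
    rw [Nat.zero_add, SimpleGraph.Walk.getVert_cons_succ]
    intro hx
    have : u ∈ q.support := hx ▸ aux_getVert_mem_support q i
    exact ((SimpleGraph.Walk.cons_isPath_iff h q).mp hp).2 this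

lemma aux_edge_not_shared {x y c : V} {P : G.Walk x y} {C : G.Walk c c}
    (hm : ∀ v ∈ P.support, v ∈ C.support → v = y) :
    ∀ e ∈ P.edges, e ∉ C.edges := by
  intro e
  refine Sym2.ind (fun u v heP heC => ?_) e
  have h1 := hm u (P.fst_mem_support_of_mem_edges heP) (C.fst_mem_support_of_mem_edges heC)
  have h2 := hm v (P.snd_mem_support_of_mem_edges heP) (C.snd_mem_support_of_mem_edges heC)
  exact (P.adj_of_mem_edges heP).ne (h1.trans h2.symm)

end Aux

/-- Given an odd cycle C avoiding x and two edge-disjoint paths from x to C,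
each meeting C only in its final vertex, G contains an odd x-circuit: a closed trail of odd
length from x to x in which x does not occur as an internal vertex. -/
theorem odd_xCircuit_from_paths_to_odd_cycle {V : Type*} [Fintype V] (G : SimpleGraph V)
    (x : V) {c : V} (C : G.Walk c c) (hC : C.IsCycle) (hCodd : Odd C.length)
    (hxC : x ∉ C.support)
    {y₁ y₂ : V} (P₁ : G.Walk x y₁) (P₂ : G.Walk x y₂)
    (hP₁ : P₁.IsPath) (hP₂ : P₂.IsPath)
    (hy₁ : y₁ ∈ C.support) (hy₂ : y₂ ∈ C.support)
    (hmeet₁ : ∀ v ∈ P₁.support, v ∈ C.support → v = y₁)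
    (hmeet₂ : ∀ v ∈ P₂.support, v ∈ C.support → v = y₂)
    (hdisj : List.Disjoint P₁.edges P₂.edges) :
    ∃ w : G.Walk x x, w.IsTrail ∧ Odd w.length ∧
      ∀ i, 0 < i → i < w.length → w.getVert i ≠ x := by

  classical
  -- y₁, y₂ are on C, hence different from x
  have hy₁x : y₁ ≠ x := fun h => hxC (h ▸ hy₁)
  have hy₂x : y₂ ≠ x := fun h => hxC (h ▸ hy₂)
  -- Rotate C to start at y₁
  set T := C.takeUntil y₁ hy₁ with hT
  set D := C.dropUntil y₁ hy₁ with hD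
  have hTD : T.append D = C := C.take_spec hy₁
  set C' : G.Walk y₁ y₁ := D.append T with hC'
  have hmemC' : ∀ w : V, w ∈ C'.support ↔ w ∈ C.support := by
    intro w
    rw [← hTD]
    constructor
    · rw [SimpleGraph.Walk.mem_support_append_iff, SimpleGraph.Walk.mem_support_append_iff]
      tauto
    · rw [SimpleGraph.Walk.mem_support_append_iff, SimpleGraph.Walk.mem_support_append_iff]
      tauto
  have hedgeC' : ∀ e, e ∈ C'.edges ↔ e ∈ C.edges := by
    intro e
    rw [← hTD, SimpleGraph.Walk.edges_append, SimpleGraph.Walk.edges_append,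
      List.mem_append, List.mem_append]
    tauto
  have hlenC' : C'.length = C.length := by
    rw [← hTD, SimpleGraph.Walk.length_append, SimpleGraph.Walk.length_append]
    omega
  have hC'trail : C'.IsTrail := by
    rw [SimpleGraph.Walk.isTrail_def, hC', SimpleGraph.Walk.edges_append]
    have := hC.isTrail.edges_nodup
    rw [← hTD, SimpleGraph.Walk.edges_append] at this
    exact (List.perm_append_comm).nodup this
  have hy₂' : y₂ ∈ C'.support := (hmemC' y₂).mpr hy₂
  have hxC' : x ∉ C'.support := fun h => hxC ((hmemC' x).mp h)
  -- the two arcs of C' from y₁ to y₂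
  set A := C'.takeUntil y₂ hy₂' with hA
  set B := C'.dropUntil y₂ hy₂' with hB
  have hAB : A.append B = C' := C'.take_spec hy₂'
  have hABlen : A.length + B.length = C.length := by
    rw [← hlenC', ← hAB, SimpleGraph.Walk.length_append]
  -- choose the arc Q of the right parity
  obtain ⟨Q, hQt, hQe, hQs, hQpar⟩ :
      ∃ Q : G.Walk y₁ y₂, Q.IsTrail ∧ (∀ e ∈ Q.edges, e ∈ C.edges) ∧
        (∀ v ∈ Q.support, v ∈ C.support) ∧
        Odd (P₁.length + (Q.length + P₂.length)) := by
    rcases Nat.even_or_odd (P₁.length + (A.length + P₂.length)) with hev | hodd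
    · refine ⟨B.reverse, (hC'trail.dropUntil hy₂').reverse, ?_, ?_, ?_⟩
      · intro e he
        rw [SimpleGraph.Walk.edges_reverse, List.mem_reverse] at he
        exact (hedgeC' e).mp (C'.edges_dropUntil_subset hy₂' he)
      · intro v hv
        rw [SimpleGraph.Walk.support_reverse, List.mem_reverse] at hv
        exact (hmemC' v).mp (C'.support_dropUntil_subset hy₂' hv)
      · rw [SimpleGraph.Walk.length_reverse]
        rw [Nat.even_iff] at hev
        rw [Nat.odd_iff] at hCodd ⊢
        omega
    · exact ⟨A, hC'trail.takeUntil hy₂',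
        fun e he => (hedgeC' e).mp (C'.edges_takeUntil_subset hy₂' he),
        fun v hv => (hmemC' v).mp (C'.support_takeUntil_subset hy₂' hv), hodd⟩
  have hxQ : x ∉ Q.support := fun h => hxC (hQs x h)
  -- edge-disjointness facts
  have hd1 : ∀ e ∈ P₁.edges, e ∉ Q.edges :=
    fun e he hq => aux_edge_not_shared hmeet₁ e he (hQe e hq)
  have hd2 : ∀ e ∈ P₂.edges, e ∉ Q.edges :=
    fun e he hq => aux_edge_not_shared hmeet₂ e he (hQe e hq)
  -- the circuit
  refine ⟨P₁.append (Q.append P₂.reverse), ?_, ?_, ?_⟩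
  · rw [SimpleGraph.Walk.isTrail_def, SimpleGraph.Walk.edges_append,
      SimpleGraph.Walk.edges_append, SimpleGraph.Walk.edges_reverse]
    refine List.Nodup.append hP₁.isTrail.edges_nodup
      (List.Nodup.append hQt.edges_nodup (List.nodup_reverse.mpr hP₂.isTrail.edges_nodup) ?_) ?_
    · intro e he he'
      rw [List.mem_reverse] at he'
      exact hd2 e he' he
    · intro e he he'
      rw [List.mem_append, List.mem_reverse] at he'
      rcases he' with h | h
      · exact hd1 e he h
      · exact hdisj he h
  · simpa [SimpleGraph.Walk.length_append, SimpleGraph.Walk.length_reverse] using hQpar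
  · intro i hi hil
    rw [SimpleGraph.Walk.length_append, SimpleGraph.Walk.length_append,
      SimpleGraph.Walk.length_reverse] at hil
    rw [SimpleGraph.Walk.getVert_append]
    split_ifs with h1
    · exact aux_path_getVert_ne_start hP₁ hi (le_of_lt h1)
    · rw [SimpleGraph.Walk.getVert_append]
      split_ifs with h2
      · intro hx
        exact hxQ (hx ▸ aux_getVert_mem_support Q _)
      · rw [SimpleGraph.Walk.getVert_reverse]
        have hk : i - P₁.length - Q.length < P₂.length := by omega
        have : 0 < P₂.length - (i - P₁.length - Q.length) := by omega
        exact (aux_path_getVert_ne_start hP₂ this (by omega)).symm ∘ Eq.symm ∘ id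
end
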